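/- If (X,Y) is reverse (p,q)-hypercontractive with p < 1, p ≠ 0 and p ≤ q ≤ 1 (i.e., ‖E[g(Y)|X]‖_p ≥ ‖g(Y)‖_q for all nonnegative g), then ρ_m(X;Y)² ≤ (q-1)/(p-1) = (1-q)/(1-p). -/

import Mathlib

open Finset Real

noncomputable def fexp {Ω : Type*} [Fintype Ω] (w : Ω → ℝ) (f : Ω → ℝ) : ℝ :=
  ∑ ω, w ω * f ω

def IsProbWeight {Ω : Type*} [Fintype Ω] (w : Ω → ℝ) : Prop :=
  (∀ ω, 0 ≤ w ω) ∧ ∑ ω, w ω = 1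

noncomputable def maxCorr {Ω A B : Type*} [Fintype Ω] (w : Ω → ℝ)
    (X : Ω → A) (Y : Ω → B) : ℝ :=
  sSup { r : ℝ | ∃ f : A → ℝ, ∃ g : B → ℝ,
    fexp w (fun ω => f (X ω)) = 0 ∧ fexp w (fun ω => g (Y ω)) = 0 ∧
    fexp w (fun ω => (f (X ω))^2) ≤ 1 ∧ fexp w (fun ω => (g (Y ω))^2) ≤ 1 ∧
    r = fexp w (fun ω => f (X ω) * g (Y ω)) }

noncomputable def condExpOn {Ω A : Type*} [Fintype Ω] [DecidableEq A]
    (w : Ω → ℝ) (X : Ω → A) (h : Ω → ℝ) (ω : Ω) : ℝ :=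
  (∑ ωp, if X ωp = X ω then w ωp * h ωp else 0) / (∑ ωp, if X ωp = X ω then w ωp else 0)

noncomputable def pnorm {Ω : Type*} [Fintype Ω] (w : Ω → ℝ) (p : ℝ) (W : Ω → ℝ) : ℝ :=
  if p ≤ 0 ∧ ∃ ω, 0 < w ω ∧ W ω = 0 then 0
  else if p = 0 then Real.exp (fexp w (fun ω => Real.log |W ω|))
  else (fexp w (fun ω => |W ω| ^ p)) ^ (1 / p)

/-
Apply reverse hypercontractivity to `1 + ε g(Y)` with `g(Y)` centred. The conditional expectation
`T = E[g(Y) | X]` is centred too, and the expansion `log ‖1 + ε U‖_r = (r - 1) ε² E[U²] / 2 + o(ε²)`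
for centred `U` (valid for every `r`, including `r = 0`) turns `‖1 + ε g(Y)‖_q ≤ ‖1 + ε T‖_p` into
`(q - 1) E[g(Y)²] ≤ (p - 1) E[T²]`, i.e. `E[T²] ≤ (q - 1)/(p - 1) E[g(Y)²]` as `p < 1`. By the tower
property and Cauchy–Schwarz, `E[f(X) g(Y)] = E[f(X) T] ≤ ‖f(X)‖₂ ‖T‖₂`, which bounds `ρ_m`.
-/

open Filter Topology

lemma tendsto_div_sq_of_hasDerivAt {f f' : ℝ → ℝ} {c : ℝ}
    (hf : ∀ᶠ x in 𝓝[≠] 0, HasDerivAt f (f' x) x) (hf' : HasDerivAt f' c 0)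
    (hf0 : Tendsto f (𝓝[≠] 0) (𝓝 0)) (hf'0 : f' 0 = 0) :
    Tendsto (fun x => f x / x ^ 2) (𝓝[≠] 0) (𝓝 (c / 2)) := by
  refine HasDerivAt.lhopital_zero_nhdsNE (g' := fun x => 2 * x) hf
    (Eventually.of_forall fun x => by simpa using hasDerivAt_pow 2 x)
    (eventually_mem_nhdsWithin.mono fun x hx => by simpa using hx) hf0
    (tendsto_nhdsWithin_of_tendsto_nhds (by simpa using (continuous_pow 2).tendsto (0 : ℝ))) ?_
  refine ((hasDerivAt_iff_tendsto_slope.mp hf').div_const 2).congr' ?_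
  filter_upwards [eventually_mem_nhdsWithin] with x hx
  rw [slope_def_field, hf'0]
  field_simp [show x ≠ 0 from hx]
  ring

lemma tendsto_sub_taylor_div_sq {φ φ' : ℝ → ℝ} {a c : ℝ}
    (hφ : ∀ᶠ x in 𝓝 a, HasDerivAt φ (φ' x) x) (hφ' : HasDerivAt φ' c a) (t : ℝ) :
    Tendsto (fun ε => (φ (a + ε * t) - φ a - φ' a * (ε * t)) / ε ^ 2) (𝓝[≠] 0)
      (𝓝 (c * t ^ 2 / 2)) := by
  have hline (ε : ℝ) : HasDerivAt (fun x : ℝ => a + x * t) t ε :=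
    (hasDerivAt_mul_const t).const_add a
  have hline0 : Tendsto (fun ε : ℝ => a + ε * t) (𝓝 0) (𝓝 a) := by
    simpa using (hline 0).continuousAt.tendsto
  have hderiv : ∀ᶠ ε in 𝓝 0, HasDerivAt (fun ε => φ (a + ε * t) - φ a - φ' a * (ε * t))
      (φ' (a + ε * t) * t - φ' a * t) ε := by
    filter_upwards [hline0.eventually hφ] with ε hε
    exact ((hε.comp ε (hline ε)).sub_const (φ a)).sub
      ((hasDerivAt_mul_const t).const_mul (φ' a))
  have hderiv2 : HasDerivAt (fun ε => φ' (a + ε * t) * t - φ' a * t) (c * t * t) 0 :=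
    ((hφ'.comp_of_eq 0 (hline 0) (by simp)).mul_const t).sub_const _
  have hf0 := (hderiv.self_of_nhds.continuousAt.tendsto).mono_left (nhdsWithin_le_nhds (s := {0}ᶜ))
  simp only [zero_mul, add_zero, sub_self, mul_zero] at hf0
  convert tendsto_div_sq_of_hasDerivAt (nhdsWithin_le_nhds hderiv) hderiv2 hf0 (by simp) using 2
  ring

lemma tendsto_one_add_mul_rpow_sub_div_sq (r t : ℝ) :
    Tendsto (fun ε => ((1 + ε * t) ^ r - 1 - r * ε * t) / ε ^ 2) (𝓝[≠] 0)
      (𝓝 (r * (r - 1) * t ^ 2 / 2)) := by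
  have hφ : ∀ᶠ x in 𝓝 (1 : ℝ), HasDerivAt (fun x => x ^ r) (r * x ^ (r - 1)) x :=
    (lt_mem_nhds one_pos).mono fun x hx => hasDerivAt_rpow_const (Or.inl hx.ne')
  have hφ' : HasDerivAt (fun x => r * x ^ (r - 1)) (r * (r - 1)) 1 := by
    simpa using ((hasDerivAt_rpow_const (p := r - 1) (Or.inl one_ne_zero)).const_mul r)
  convert tendsto_sub_taylor_div_sq hφ hφ' t using 2 with ε
  simp only [one_rpow, mul_one]
  ring

lemma tendsto_log_one_add_mul_sub_div_sq (t : ℝ) :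
    Tendsto (fun ε => (log (1 + ε * t) - ε * t) / ε ^ 2) (𝓝[≠] 0) (𝓝 (-t ^ 2 / 2)) := by
  have hφ : ∀ᶠ x in 𝓝 (1 : ℝ), HasDerivAt log x⁻¹ x :=
    (lt_mem_nhds one_pos).mono fun x hx => hasDerivAt_log hx.ne'
  convert tendsto_sub_taylor_div_sq hφ (hasDerivAt_inv one_ne_zero) t using 2 with ε
  · simp
  · ring

lemma tendsto_log_div_of_tendsto_sub_one_div {α : Type*} {l : Filter α} {m d : α → ℝ} {L : ℝ}
    (hd : Tendsto d l (𝓝 0)) (hd_pos : ∀ᶠ x in l, 0 < d x) (hm_pos : ∀ᶠ x in l, 0 < m x)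
    (hm : Tendsto (fun x => (m x - 1) / d x) l (𝓝 L)) :
    Tendsto (fun x => log (m x) / d x) l (𝓝 L) := by
  have hm1 : Tendsto m l (𝓝 1) := by
    have h := (hm.mul hd).const_add 1
    rw [mul_zero, add_zero] at h
    refine h.congr' ?_
    filter_upwards [hd_pos] with x hx
    field_simp
    ring
  have hlower := hm.mul (hm1.inv₀ one_ne_zero)
  rw [inv_one, mul_one] at hlower
  refine tendsto_of_tendsto_of_tendsto_of_le_of_le' hlower hm ?_ ?_
  · filter_upwards [hd_pos, hm_pos] with x hd hm
    rw [div_mul_eq_mul_div]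
    refine div_le_div_of_nonneg_right ?_ hd.le
    calc (m x - 1) * (m x)⁻¹ = 1 - (m x)⁻¹ := by field_simp
      _ ≤ log (m x) := one_sub_inv_le_log_of_pos hm
  · filter_upwards [hd_pos, hm_pos] with x hd hm
    exact div_le_div_of_nonneg_right (log_le_sub_one_of_pos hm) hd.le

section fexp

variable {Ω : Type*} [Fintype Ω] {w : Ω → ℝ}

lemma fexp_congr {f f' : Ω → ℝ} (h : ∀ ω, w ω ≠ 0 → f ω = f' ω) : fexp w f = fexp w f' :=
  Finset.sum_congr rfl fun ω _ => by
    by_cases hω : w ω = 0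
    · simp [hω]
    · rw [h ω hω]

lemma fexp_sub (f g : Ω → ℝ) : fexp w (fun ω => f ω - g ω) = fexp w f - fexp w g := by
  simp only [fexp, mul_sub, Finset.sum_sub_distrib]

lemma fexp_const_mul (c : ℝ) (f : Ω → ℝ) : fexp w (fun ω => c * f ω) = c * fexp w f := by
  simp only [fexp, Finset.mul_sum]
  exact Finset.sum_congr rfl fun ω _ => by ring

lemma fexp_div_const (f : Ω → ℝ) (c : ℝ) : fexp w (fun ω => f ω / c) = fexp w f / c := by
  simp only [fexp, Finset.sum_div, mul_div_assoc]

lemma fexp_const (hw : IsProbWeight w) (c : ℝ) : fexp w (fun _ => c) = c := by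
  rw [fexp, ← Finset.sum_mul, hw.2, one_mul]

lemma fexp_nonneg (hw0 : ∀ ω, 0 ≤ w ω) {f : Ω → ℝ} (hf : ∀ ω, 0 ≤ f ω) : 0 ≤ fexp w f :=
  Finset.sum_nonneg fun ω _ => mul_nonneg (hw0 ω) (hf ω)

lemma fexp_pos (hw : IsProbWeight w) {V : Ω → ℝ} (hV : ∀ ω, 0 < V ω) : 0 < fexp w V := by
  obtain ⟨ω, -, hω⟩ := Finset.exists_ne_zero_of_sum_ne_zero (hw.2.trans_ne one_ne_zero)
  exact Finset.sum_pos' (fun ω _ => mul_nonneg (hw.1 ω) (hV ω).le)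
    ⟨ω, Finset.mem_univ ω, mul_pos ((hw.1 ω).lt_of_ne' hω) (hV ω)⟩

lemma sq_fexp_mul_le (hw0 : ∀ ω, 0 ≤ w ω) (f g : Ω → ℝ) :
    fexp w (fun ω => f ω * g ω) ^ 2 ≤ fexp w (fun ω => f ω ^ 2) * fexp w (fun ω => g ω ^ 2) :=
  Finset.sum_sq_le_sum_mul_sum_of_sq_le_mul _
    (fun ω _ => mul_nonneg (hw0 ω) (sq_nonneg _)) (fun ω _ => mul_nonneg (hw0 ω) (sq_nonneg _))
    fun ω _ => le_of_eq (by ring)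

lemma tendsto_fexp {α : Type*} {l : Filter α} {F : Ω → α → ℝ} {L : Ω → ℝ}
    (h : ∀ ω, Tendsto (F ω) l (𝓝 (L ω))) :
    Tendsto (fun x => fexp w (fun ω => F ω x)) l (𝓝 (fexp w L)) :=
  tendsto_finsetSum _ fun ω _ => (h ω).const_mul (w ω)

end fexp

section pnorm

variable {Ω : Type*} [Fintype Ω] {w : Ω → ℝ} {r : ℝ} {W : Ω → ℝ}

lemma pnorm_congr {W' : Ω → ℝ} (h : ∀ ω, w ω ≠ 0 → W ω = W' ω) :
    pnorm w r W = pnorm w r W' := by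
  have hzero : (∃ ω, 0 < w ω ∧ W ω = 0) ↔ (∃ ω, 0 < w ω ∧ W' ω = 0) :=
    exists_congr fun ω => and_congr_right fun hω => by rw [h ω hω.ne']
  unfold pnorm
  rw [fexp_congr fun ω hω => by rw [h ω hω], fexp_congr (f := fun ω => |W ω| ^ r)
    fun ω hω => by rw [h ω hω]]
  simp only [hzero]

lemma pnorm_zero_of_pos (hW : ∀ ω, 0 < W ω) :
    pnorm w 0 W = exp (fexp w fun ω => log (W ω)) := by
  have hzero : ¬∃ ω, 0 < w ω ∧ W ω = 0 := by
    rintro ⟨ω, -, hω⟩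
    exact (hW ω).ne' hω
  simp only [pnorm, hzero, and_false, if_false, if_true, abs_of_pos (hW _)]

lemma pnorm_of_pos (hr : r ≠ 0) (hW : ∀ ω, 0 < W ω) :
    pnorm w r W = (fexp w fun ω => W ω ^ r) ^ (1 / r) := by
  have hzero : ¬∃ ω, 0 < w ω ∧ W ω = 0 := by
    rintro ⟨ω, -, hω⟩
    exact (hW ω).ne' hω
  simp only [pnorm, hzero, hr, and_false, if_false, abs_of_pos (hW _)]

lemma pnorm_pos (hw : IsProbWeight w) (hW : ∀ ω, 0 < W ω) : 0 < pnorm w r W := by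
  by_cases hr : r = 0
  · rw [hr, pnorm_zero_of_pos hW]
    exact exp_pos _
  · rw [pnorm_of_pos hr hW]
    exact rpow_pos_of_pos (fexp_pos hw fun ω => rpow_pos_of_pos (hW ω) r) _

lemma eventually_forall_one_add_mul_pos (U : Ω → ℝ) : ∀ᶠ ε in 𝓝 (0 : ℝ), ∀ ω, 0 < 1 + ε * U ω :=
  eventually_all.2 fun ω => ((continuous_const.add (continuous_id.mul continuous_const)).tendsto'
    0 1 (by simp)).eventually (lt_mem_nhds one_pos)

lemma tendsto_log_pnorm_one_add_mul_div_sq (hw : IsProbWeight w) (r : ℝ) {U : Ω → ℝ}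
    (hU : fexp w U = 0) :
    Tendsto (fun ε => log (pnorm w r fun ω => 1 + ε * U ω) / ε ^ 2) (𝓝[≠] 0)
      (𝓝 ((r - 1) / 2 * fexp w fun ω => U ω ^ 2)) := by
  have hpos : ∀ᶠ ε in 𝓝[≠] 0, ∀ ω, 0 < 1 + ε * U ω :=
    (eventually_forall_one_add_mul_pos U).filter_mono nhdsWithin_le_nhds
  by_cases hr : r = 0
  · subst hr
    have h := tendsto_fexp (w := w) fun ω => tendsto_log_one_add_mul_sub_div_sq (U ω)
    rw [show (0 - 1) / 2 * fexp w (fun ω => U ω ^ 2) = fexp w fun ω => -U ω ^ 2 / 2 by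
      simp only [neg_div, ← fexp_const_mul]; ring_nf]
    refine h.congr' ?_
    filter_upwards [hpos] with ε hε
    rw [pnorm_zero_of_pos hε, log_exp, fexp_div_const, fexp_sub, fexp_const_mul, hU, mul_zero,
      sub_zero]
  · set m : ℝ → ℝ := fun ε => fexp w fun ω => (1 + ε * U ω) ^ r
    have hm : Tendsto (fun ε => (m ε - 1) / ε ^ 2) (𝓝[≠] 0)
        (𝓝 (r * (r - 1) * fexp w (fun ω => U ω ^ 2) / 2)) := by
      have h := tendsto_fexp (w := w) fun ω => tendsto_one_add_mul_rpow_sub_div_sq r (U ω)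
      rw [fexp_div_const, fexp_const_mul] at h
      refine h.congr fun ε => ?_
      rw [fexp_div_const, fexp_sub, fexp_sub, fexp_const hw, fexp_const_mul, hU, mul_zero, sub_zero]
    have hsq : Tendsto (fun ε : ℝ => ε ^ 2) (𝓝[≠] 0) (𝓝 0) :=
      tendsto_nhdsWithin_of_tendsto_nhds (by simpa using (continuous_pow 2).tendsto (0 : ℝ))
    have hsq_pos : ∀ᶠ ε : ℝ in 𝓝[≠] 0, 0 < ε ^ 2 :=
      eventually_mem_nhdsWithin.mono fun ε hε => sq_pos_of_ne_zero hε
    have hm_pos : ∀ᶠ ε in 𝓝[≠] 0, 0 < m ε :=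
      hpos.mono fun ε hε => fexp_pos hw fun ω => rpow_pos_of_pos (hε ω) r
    have hlog := (tendsto_log_div_of_tendsto_sub_one_div hsq hsq_pos hm_pos hm).const_mul r⁻¹
    rw [show r⁻¹ * (r * (r - 1) * fexp w (fun ω => U ω ^ 2) / 2)
      = (r - 1) / 2 * fexp w (fun ω => U ω ^ 2) by field_simp] at hlog
    refine hlog.congr' ?_
    filter_upwards [hpos, hm_pos] with ε hε hmε
    rw [pnorm_of_pos hr hε, log_rpow hmε]
    ring

end pnorm

section condExpOn

variable {Ω A : Type*} [Fintype Ω] [DecidableEq A] {w : Ω → ℝ} {X : Ω → A}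

lemma fiber_weight_pos (hw0 : ∀ ω, 0 ≤ w ω) {ω : Ω} (hω : w ω ≠ 0) :
    0 < ∑ ω', if X ω' = X ω then w ω' else 0 :=
  Finset.sum_pos' (fun ω' _ => by split_ifs <;> simp [hw0 ω'])
    ⟨ω, Finset.mem_univ ω, by simpa using (hw0 ω).lt_of_ne' hω⟩

lemma fexp_mul_condExpOn (hw0 : ∀ ω, 0 ≤ w ω) (f : A → ℝ) (h : Ω → ℝ) :
    fexp w (fun ω => f (X ω) * condExpOn w X h ω) = fexp w (fun ω => f (X ω) * h ω) := by
  set D : Ω → ℝ := fun ω => ∑ ω', if X ω' = X ω then w ω' else 0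
  have hD (ω ω' : Ω) (hX : X ω' = X ω) : D ω = D ω' := by simp only [D, hX]
  calc fexp w (fun ω => f (X ω) * condExpOn w X h ω)
      = ∑ ω, ∑ ω', if X ω' = X ω then w ω * (f (X ω) * (w ω' * h ω') / D ω) else 0 := by
        refine Finset.sum_congr rfl fun ω _ => ?_
        simp only [condExpOn, Finset.sum_div, Finset.mul_sum]
        exact Finset.sum_congr rfl fun ω' _ => by split_ifs <;> ring
    _ = ∑ ω', ∑ ω, if X ω = X ω' then w ω * (f (X ω') * (w ω' * h ω') / D ω') else 0 := by
        rw [Finset.sum_comm]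
        refine Finset.sum_congr rfl fun ω' _ => Finset.sum_congr rfl fun ω _ => ?_
        by_cases hX : X ω' = X ω
        · rw [if_pos hX, if_pos hX.symm, hD ω ω' hX, hX]
        · rw [if_neg hX, if_neg (Ne.symm hX)]
    _ = ∑ ω', D ω' * (f (X ω') * (w ω' * h ω') / D ω') := by
        simp only [D, Finset.sum_mul, ite_mul, zero_mul]
    _ = fexp w (fun ω => f (X ω) * h ω) := by
        refine Finset.sum_congr rfl fun ω _ => ?_
        by_cases hω : w ω = 0
        · simp [hω]
        · have hDω : D ω ≠ 0 := (fiber_weight_pos hw0 hω).ne'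
          field_simp

lemma condExpOn_const_add_mul (hw0 : ∀ ω, 0 ≤ w ω) (a b : ℝ) (h : Ω → ℝ) {ω : Ω}
    (hω : w ω ≠ 0) :
    condExpOn w X (fun ω' => a + b * h ω') ω = a + b * condExpOn w X h ω := by
  have hD := (fiber_weight_pos (X := X) hw0 hω).ne'
  have hnum : (∑ ω', if X ω' = X ω then w ω' * (a + b * h ω') else 0)
      = a * (∑ ω', if X ω' = X ω then w ω' else 0)
        + b * ∑ ω', if X ω' = X ω then w ω' * h ω' else 0 := by
    rw [Finset.mul_sum, Finset.mul_sum, ← Finset.sum_add_distrib]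
    exact Finset.sum_congr rfl fun ω' _ => by split_ifs <;> ring
  rw [condExpOn, condExpOn, hnum]
  field_simp

end condExpOn

def IsReverseHypercontractive {Ω A B : Type*} [Fintype Ω] [DecidableEq A] (w : Ω → ℝ)
    (X : Ω → A) (Y : Ω → B) (p q : ℝ) : Prop :=
  ∀ g : B → ℝ, (∀ b, 0 ≤ g b) →
    pnorm w q (fun ω => g (Y ω)) ≤ pnorm w p (condExpOn w X (fun ω' => g (Y ω')))

section reverseHypercontractive

variable {Ω A B : Type*} [Fintype Ω] [DecidableEq A] {w : Ω → ℝ} {X : Ω → A} {Y : Ω → B}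

theorem sub_one_mul_fexp_sq_le_of_isReverseHypercontractive (hw : IsProbWeight w) {p q : ℝ}
    (hrhc : IsReverseHypercontractive w X Y p q) {g : B → ℝ}
    (hg : fexp w (fun ω => g (Y ω)) = 0) :
    (q - 1) * fexp w (fun ω => g (Y ω) ^ 2)
      ≤ (p - 1) * fexp w (fun ω => condExpOn w X (fun ω' => g (Y ω')) ω ^ 2) := by
  set T := condExpOn w X (fun ω' => g (Y ω'))
  have hT : fexp w T = 0 := by
    have h := fexp_mul_condExpOn (X := X) hw.1 (fun _ => 1) (fun ω => g (Y ω))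
    simp only [one_mul] at h
    rw [h, hg]
  suffices (q - 1) / 2 * fexp w (fun ω => g (Y ω) ^ 2) ≤ (p - 1) / 2 * fexp w (fun ω => T ω ^ 2) by
    linarith
  refine le_of_tendsto_of_tendsto (tendsto_log_pnorm_one_add_mul_div_sq hw q hg)
    (tendsto_log_pnorm_one_add_mul_div_sq hw p hT) ?_
  filter_upwards [(eventually_forall_one_add_mul_pos fun ω => g (Y ω)).filter_mono
    nhdsWithin_le_nhds] with ε hε
  have habs : ∀ ω, |1 + ε * g (Y ω)| = 1 + ε * g (Y ω) := fun ω => abs_of_pos (hε ω)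
  have h := hrhc (fun b => |1 + ε * g b|) fun b => abs_nonneg _
  simp only [habs] at h
  rw [pnorm_congr (W' := fun ω => 1 + ε * T ω)
    fun ω hω => condExpOn_const_add_mul hw.1 1 ε _ hω] at h
  exact div_le_div_of_nonneg_right (log_le_log (pnorm_pos hw hε) h) (sq_nonneg ε)

end reverseHypercontractive

section maxCorr

variable {Ω A B : Type*} [Fintype Ω] {w : Ω → ℝ} {X : Ω → A} {Y : Ω → B}

lemma maxCorr_nonneg : 0 ≤ maxCorr w X Y :=
  Real.sSup_nonneg' ⟨0, ⟨fun _ => 0, fun _ => 0, by simp [fexp]⟩, le_rfl⟩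

lemma maxCorr_le {b : ℝ} (h : ∀ (f : A → ℝ) (g : B → ℝ), fexp w (fun ω => f (X ω)) = 0 →
      fexp w (fun ω => g (Y ω)) = 0 → fexp w (fun ω => f (X ω) ^ 2) ≤ 1 →
      fexp w (fun ω => g (Y ω) ^ 2) ≤ 1 → fexp w (fun ω => f (X ω) * g (Y ω)) ≤ b) :
    maxCorr w X Y ≤ b :=
  csSup_le ⟨0, fun _ => 0, fun _ => 0, by simp [fexp]⟩ fun _ ⟨f, g, hf, hg, hf2, hg2, hr⟩ =>
    hr ▸ h f g hf hg hf2 hg2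

lemma maxCorr_sq_le_of_fexp_sq_condExpOn_le [DecidableEq A] (hw0 : ∀ ω, 0 ≤ w ω) {c : ℝ}
    (hc : 0 ≤ c) (h : ∀ g : B → ℝ, fexp w (fun ω => g (Y ω)) = 0 →
      fexp w (fun ω => condExpOn w X (fun ω' => g (Y ω')) ω ^ 2)
        ≤ c * fexp w (fun ω => g (Y ω) ^ 2)) :
    maxCorr w X Y ^ 2 ≤ c := by
  have hle : maxCorr w X Y ≤ √c := maxCorr_le fun f g _ hg hf2 hg2 => by
    rw [← fexp_mul_condExpOn hw0]
    refine (le_abs_self _).trans (abs_le_sqrt ?_)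
    calc _ ≤ fexp w (fun ω => f (X ω) ^ 2)
          * fexp w (fun ω => condExpOn w X (fun ω' => g (Y ω')) ω ^ 2) := sq_fexp_mul_le hw0 _ _
      _ ≤ 1 * c := mul_le_mul hf2 ((h g hg).trans (mul_le_of_le_one_right hc hg2))
          (fexp_nonneg hw0 fun _ => sq_nonneg _) zero_le_one
      _ = c := one_mul c
  calc maxCorr w X Y ^ 2 ≤ √c ^ 2 := pow_le_pow_left₀ maxCorr_nonneg hle 2
    _ = c := sq_sqrt hc

end maxCorr

theorem rhc_implies_maxCorr_sq_bound_general {Ω A B : Type*} [Fintype Ω]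
    [DecidableEq A]
    (w : Ω → ℝ) (hw : IsProbWeight w) (X : Ω → A) (Y : Ω → B)
    (p q : ℝ) (hp : p < 1) (hq : q ≤ 1)
    (hrhc : ∀ g : B → ℝ, (∀ b, 0 ≤ g b) →
      pnorm w q (fun ω => g (Y ω))
        ≤ pnorm w p (condExpOn w X (fun ωp => g (Y ωp)))) :
    (maxCorr w X Y)^2 ≤ (q - 1) / (p - 1) := by
  refine maxCorr_sq_le_of_fexp_sq_condExpOn_le hw.1
    (div_nonneg_of_nonpos (by linarith) (by linarith)) fun g hg => ?_
  have h := sub_one_mul_fexp_sq_le_of_isReverseHypercontractive hw hrhc hg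
  rw [div_mul_eq_mul_div, le_div_iff_of_neg (by linarith)]
  linarith

theorem rhc_implies_maxCorr_sq_bound {Ω A B : Type*} [Fintype Ω] [Fintype A] [Fintype B]
    [DecidableEq A]
    (w : Ω → ℝ) (hw : IsProbWeight w) (X : Ω → A) (Y : Ω → B)
    (p q : ℝ) (hp : p < 1) (hp0 : p ≠ 0) (hpq : p ≤ q) (hq : q ≤ 1)
    (hrhc : ∀ g : B → ℝ, (∀ b, 0 ≤ g b) →
      pnorm w q (fun ω => g (Y ω))
        ≤ pnorm w p (condExpOn w X (fun ωp => g (Y ωp)))) :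
    (maxCorr w X Y)^2 ≤ (q - 1) / (p - 1) :=
  rhc_implies_maxCorr_sq_bound_general w hw X Y p q hp hq hrhc
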